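/- Consider dynA* with a dyn-admissible dynamic heuristic h on a solvable transition system with initial state s_I. Then at the beginning of every iteration, the open queue contains an entry (·, g, hval) with g + hval ≤ h*(s_I). -/

import Mathlib

open scoped ENNReal Classical

/-! ## Transition systems -/

/-- A labeled transition: (origin, label, target). -/
abbrev Tran (S L : Type) := S × L × S

/-- A transition system with states `S`, labels `L`, a cost function,
a set of labeled transitions, an initial state and a set of goal states. -/
structure TransSys (S L : Type) where
  cost : L → NNReal
  trans : Set (Tran S L)
  init : S
  goal : Set S

namespace TransSys

variable {S L : Type}

/-- `IsPathFrom ts s π s'`: `π` is a path from `s` to `s'` in `ts`. -/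
inductive IsPathFrom (ts : TransSys S L) : S → List (Tran S L) → S → Prop
  | nil (s : S) : IsPathFrom ts s [] s
  | cons {s m e : S} {l : L} {π : List (Tran S L)} :
      (s, l, m) ∈ ts.trans → IsPathFrom ts m π e → IsPathFrom ts s ((s, l, m) :: π) e

/-- The cost of a path: sum of the costs of its labels. -/
def pathCost (ts : TransSys S L) (π : List (Tran S L)) : NNReal :=
  (π.map fun t => ts.cost t.2.1).sum

/-- A state is reachable if there is a path from the initial state to it. -/
def Reachable (ts : TransSys S L) (s : S) : Prop := ∃ π, ts.IsPathFrom ts.init π s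

/-- A solution is a path from the initial state to a goal state. -/
def Solution (ts : TransSys S L) (π : List (Tran S L)) : Prop :=
  ∃ s ∈ ts.goal, ts.IsPathFrom ts.init π s

def Solvable (ts : TransSys S L) : Prop := ∃ π, ts.Solution π

/-- `h*`: minimal cost of a path from `s` to a goal state (`∞` if none exists). -/
noncomputable def hstar (ts : TransSys S L) (s : S) : ℝ≥0∞ :=
  sInf {x : ℝ≥0∞ | ∃ π, ∃ g ∈ ts.goal, ts.IsPathFrom s π g ∧ x = (ts.pathCost π : ℝ≥0∞)}

/-- `g*`: minimal cost of a path from the initial state to `s` (`∞` if none exists). -/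
noncomputable def gstar (ts : TransSys S L) (s : S) : ℝ≥0∞ :=
  sInf {x : ℝ≥0∞ | ∃ π, ts.IsPathFrom ts.init π s ∧ x = (ts.pathCost π : ℝ≥0∞)}

end TransSys

/-! ## Information sources and dynamic heuristics -/

/-- An information source for a transition system (Definition 1). -/
structure InfoSource {S L : Type} (ts : TransSys S L) (I : Type) where
  initInfo : I
  update : I → Tran S L → I
  refine : I → S → I

namespace InfoSource

variable {S L I : Type} {ts : TransSys S L}

/-- `ReachWith σ i K`: information object `i` is obtained from the initial
information by updates/refinements, where `K` is the set consisting of the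
initial state together with all targets of used transitions, every refined state
lies in `K`, and the origin of every used transition lies in `K` (Definition 2). -/
inductive ReachWith (σ : InfoSource ts I) : I → Set S → Prop
  | base : ReachWith σ σ.initInfo {ts.init}
  | update {i : I} {K : Set S} {t : Tran S L} :
      ReachWith σ i K → t ∈ ts.trans → t.1 ∈ K →
      ReachWith σ (σ.update i t) (insert t.2.2 K)
  | refine {i : I} {K : Set S} {s : S} :
      ReachWith σ i K → s ∈ K → ReachWith σ (σ.refine i s) K

/-- An information object is reachable (Definition 2). -/
def ReachableInfo (σ : InfoSource ts I) (i : I) : Prop := ∃ K, σ.ReachWith i K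

end InfoSource

section HeuristicProps

variable {S L I : Type} (ts : TransSys S L) (σ : InfoSource ts I) (h : S → I → ℝ≥0∞)

def DynSafe : Prop := ∀ (s : S) (i : I), σ.ReachableInfo i → h s i = ⊤ → ts.hstar s = ⊤

def DynAdmissible : Prop := ∀ (s : S) (i : I), σ.ReachableInfo i → h s i ≤ ts.hstar s

def DynConsistent : Prop :=
  ∀ t ∈ ts.trans, ∀ i : I, σ.ReachableInfo i →
    h t.1 i ≤ (ts.cost t.2.1 : ℝ≥0∞) + h t.2.2 i

def DynGoalAware : Prop := ∀ s ∈ ts.goal, ∀ i : I, σ.ReachableInfo i → h s i = 0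

def DynMonotonic : Prop :=
  ∀ i : I, σ.ReachableInfo i →
    (∀ s : S, ∀ t ∈ ts.trans, h s i ≤ h s (σ.update i t)) ∧
    (∀ s s' : S, h s i ≤ h s (σ.refine i s'))

end HeuristicProps

/-! ## Progression sources -/

/-- A progression source (Definition 5). -/
structure ProgSource {S L : Type} (ts : TransSys S L) (J : Type) where
  initJ : J
  progress : J → Tran S L → J
  merge : J → J → J

/-- The progression-based information source built on a progression source
(Definition 7): per-state information, updated by progressing along a
transition and merging with existing information at the target. -/
noncomputable def progInfoSource {S L J : Type} (ts : TransSys S L) (p : ProgSource ts J) :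
    InfoSource ts (S → Option J) where
  initInfo := fun x => if x = ts.init then some p.initJ else none
  update := fun i t => fun x =>
    if x = t.2.2 then
      match i t.1 with
      | none => i t.2.2
      | some j =>
        match i t.2.2 with
        | none => some (p.progress j t)
        | some j' => some (p.merge (p.progress j t) j')
    else i x
  refine := fun i _ => i

/-- The parent source (Definition 6): per-state `g`-values and parent pointers. -/
noncomputable def parentSource {S L : Type} (ts : TransSys S L) :
    ProgSource ts (NNReal × Option (Tran S L)) where
  initJ := (0, none)
  progress := fun j t => (j.1 + ts.cost t.2.1, some t)
  merge := fun a b => if a.1 ≤ b.1 then a else b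

/-- `ParentChain par s π`: `π` is the sequence of transitions obtained by
following parent pointers backwards from `s` until a state whose stored
pointer is `⊥` (read forwards). -/
inductive ParentChain {S L : Type} (par : S → Option (NNReal × Option (Tran S L))) :
    S → List (Tran S L) → Prop
  | nil {s : S} {g : NNReal} : par s = some (g, none) → ParentChain par s []
  | cons {g : NNReal} {t : Tran S L} {π : List (Tran S L)} :
      par t.2.2 = some (g, some t) → ParentChain par t.1 π →
      ParentChain par t.2.2 (π ++ [t])

/-! ## The dynamic heuristic search framework (Algorithm 1) -/

/-- A configuration of the framework: the known states and one information
object per information source. -/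
structure FConfig (S : Type) {ι : Type} (I : ι → Type) where
  known : Set S
  infos : ∀ k, I k

/-- The (non-terminating) operations of the framework. -/
inductive FOp where
  | genUnknown
  | genKnown
  | refineOp
deriving DecidableEq

section Framework

variable {S L ι : Type} {I : ι → Type} (ts : TransSys S L) (σ : ∀ k, InfoSource ts (I k))

/-- One step of the framework, labeled by the operation performed. -/
inductive FStep : FConfig S I → FOp → FConfig S I → Prop
  | genUnknown {c : FConfig S I} {t : Tran S L} :
      t ∈ ts.trans → t.1 ∈ c.known → t.2.2 ∉ c.known →
      FStep c .genUnknown ⟨insert t.2.2 c.known, fun k => (σ k).update (c.infos k) t⟩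
  | genKnown {c : FConfig S I} {t : Tran S L} :
      t ∈ ts.trans → t.1 ∈ c.known → t.2.2 ∈ c.known →
      FStep c .genKnown ⟨c.known, fun k => (σ k).update (c.infos k) t⟩
  | refineStep {c : FConfig S I} {s : S} :
      s ∈ c.known →
      FStep c .refineOp ⟨c.known, fun k => (σ k).refine (c.infos k) s⟩

/-- The initial configuration of the framework. -/
def initFConfig : FConfig S I := ⟨{ts.init}, fun k => (σ k).initInfo⟩

/-- A configuration occurring in some finite execution of the framework. -/
def FReach (c : FConfig S I) : Prop :=
  Relation.ReflTransGen (fun a b => ∃ op, FStep ts σ a op b) (initFConfig ts σ) c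

/-- Applicability of the gen-unknown operation. -/
def GenUnknownApp (c : FConfig S I) : Prop :=
  ∃ t ∈ ts.trans, t.1 ∈ c.known ∧ t.2.2 ∉ c.known

/-- Applicability of decl-solvable: a goal state is known. -/
def DeclSolvableApp (c : FConfig S I) : Prop := ∃ s ∈ c.known, s ∈ ts.goal

/-- Applicability of decl-unsolvable: no goal state is known and
no transition leaves the known states. -/
def DeclUnsolvableApp (c : FConfig S I) : Prop :=
  (∀ s ∈ c.known, s ∉ ts.goal) ∧ ¬ GenUnknownApp ts c

end Framework

/-! ## dynA* (Algorithm 2) -/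

/-- An open-list entry: (state, g-entry, h-entry). -/
abbrev Entry (S : Type) := S × NNReal × ℝ≥0∞

/-- The f-value of an open-list entry. -/
noncomputable def fval {S : Type} (en : Entry S) : ℝ≥0∞ := (en.2.1 : ℝ≥0∞) + en.2.2

/-- A configuration of dynA*: known states, closed set, open queue, the parent
information (g-values and parent pointers, i.e. the information of σ_p) and the
information object of the heuristic's source σ_h. -/
structure AConfig (S L I : Type) where
  known : Set S
  closed : Set S
  openq : Multiset (Entry S)
  par : S → Option (NNReal × Option (Tran S L))
  info : I

/-- The g-value currently stored for a state. -/
noncomputable def gOf {S L I : Type} (c : AConfig S L I) (s : S) : NNReal :=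
  ((c.par s).map Prod.fst).getD 0

section DynAStar

variable {S L I : Type} (ts : TransSys S L) (σh : InfoSource ts I) (h : S → I → ℝ≥0∞)

/-- Updating the parent information along a transition `t` (the update of the
progression-based parent source σ_p): the target's pair becomes
`(g(origin)+cost, t)` unless the previously stored g-value is smaller. -/
noncomputable def parUpd (par : S → Option (NNReal × Option (Tran S L))) (t : Tran S L) :
    S → Option (NNReal × Option (Tran S L)) := fun x =>
  if x = t.2.2 then
    match par t.1 with
    | none => par t.2.2
    | some (g, _) =>
      match par t.2.2 with
      | none => some (g + ts.cost t.2.1, some t)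
      | some (g', p') =>
          if g + ts.cost t.2.1 ≤ g' then some (g + ts.cost t.2.1, some t)
          else some (g', p')
  else par x

/-- Processing one successor transition `t = (s, ℓ, s')` during the expansion of
`s`: record the old g-value (undefined iff `s'` unknown), update both information
objects along `t`, add `s'` to the known states, and insert `(s', g(s'), h(s'))`
into the open queue if `h(s') < ∞` and `s'` is new or reached more cheaply
(removing `s'` from closed in the latter case: reopening). -/
noncomputable def procSucc (c : AConfig S L I) (t : Tran S L) : AConfig S L I :=
  let oldg : Option NNReal := if t.2.2 ∈ c.known then some (gOf c t.2.2) else none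
  let par' := parUpd ts c.par t
  let info' := σh.update c.info t
  let c' : AConfig S L I :=
    { known := insert t.2.2 c.known, closed := c.closed, openq := c.openq,
      par := par', info := info' }
  let gnew : NNReal := ((par' t.2.2).map Prod.fst).getD 0
  let hnew : ℝ≥0∞ := h t.2.2 info'
  if hnew = ⊤ then c'
  else
    match oldg with
    | none => { c' with openq := (t.2.2, gnew, hnew) ::ₘ c.openq }
    | some go =>
      if gnew < go then
        { c' with closed := c.closed \ {t.2.2},
                  openq := (t.2.2, gnew, hnew) ::ₘ c.openq }
      else c'

/-- Expanding a state: process all its successor transitions in order. -/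
noncomputable def expandAll (c : AConfig S L I) (l : List (Tran S L)) : AConfig S L I :=
  l.foldl (procSucc ts σh h) c

/-- `l` enumerates (without repetition) exactly the transitions with origin `s`. -/
def SuccList (s : S) (l : List (Tran S L)) : Prop :=
  l.Nodup ∧ ∀ t : Tran S L, t ∈ l ↔ t ∈ ts.trans ∧ t.1 = s

/-- Labels recording what happened in one iteration of dynA*. -/
inductive ALab (S L : Type) where
  | dup (en : Entry S)
  | reev (en : Entry S)
  | expand (en : Entry S)
  | retGoal (en : Entry S) (π : List (Tran S L))
  | unsolv

/-- The entry popped from the open queue in an iteration, if any. -/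
def popped {S L : Type} : ALab S L → Option (Entry S)
  | .dup en => some en
  | .reev en => some en
  | .expand en => some en
  | .retGoal en _ => some en
  | .unsolv => none

/-- The outcome of one iteration of dynA*. -/
inductive AOut (S L I : Type) where
  | cont (c : AConfig S L I)
  | retPath (π : List (Tran S L))
  | unsolvable

/-- One iteration of dynA* (Algorithm 2), with optional re-evaluation.
An entry of minimal f-value is popped; duplicates (closed states) are discarded;
otherwise both information objects are refined on the popped state (σ_p's refine
is the identity, so `par` is unchanged); with `reeval` set, a state whose
heuristic value increased is re-inserted instead of expanded; expanding a goal
state returns the path obtained by following parent pointers; expanding a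
non-goal state processes all its successor transitions. If the open queue is
empty, 'unsolvable' is returned. -/
inductive AStep (reeval : Bool) : AConfig S L I → ALab S L → AOut S L I → Prop
  | dup {c : AConfig S L I} {en : Entry S} {rest : Multiset (Entry S)} :
      c.openq = en ::ₘ rest → (∀ en' ∈ c.openq, fval en ≤ fval en') →
      en.1 ∈ c.closed →
      AStep reeval c (.dup en) (.cont { c with openq := rest })
  | reevFin {c : AConfig S L I} {en : Entry S} {rest : Multiset (Entry S)} :
      c.openq = en ::ₘ rest → (∀ en' ∈ c.openq, fval en ≤ fval en') →
      en.1 ∉ c.closed → reeval = true →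
      en.2.2 < h en.1 (σh.refine c.info en.1) →
      h en.1 (σh.refine c.info en.1) ≠ ⊤ →
      AStep reeval c (.reev en)
        (.cont { c with info := σh.refine c.info en.1,
                        openq := (en.1, gOf c en.1, h en.1 (σh.refine c.info en.1)) ::ₘ rest })
  | reevInf {c : AConfig S L I} {en : Entry S} {rest : Multiset (Entry S)} :
      c.openq = en ::ₘ rest → (∀ en' ∈ c.openq, fval en ≤ fval en') →
      en.1 ∉ c.closed → reeval = true →
      en.2.2 < h en.1 (σh.refine c.info en.1) →
      h en.1 (σh.refine c.info en.1) = ⊤ →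
      AStep reeval c (.reev en)
        (.cont { c with info := σh.refine c.info en.1, openq := rest })
  | retGoal {c : AConfig S L I} {en : Entry S} {rest : Multiset (Entry S)}
      {π : List (Tran S L)} :
      c.openq = en ::ₘ rest → (∀ en' ∈ c.openq, fval en ≤ fval en') →
      en.1 ∉ c.closed →
      ¬(reeval = true ∧ en.2.2 < h en.1 (σh.refine c.info en.1)) →
      en.1 ∈ ts.goal → ParentChain c.par en.1 π →
      AStep reeval c (.retGoal en π) (.retPath π)
  | expand {c : AConfig S L I} {en : Entry S} {rest : Multiset (Entry S)}
      {l : List (Tran S L)} :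
      c.openq = en ::ₘ rest → (∀ en' ∈ c.openq, fval en ≤ fval en') →
      en.1 ∉ c.closed →
      ¬(reeval = true ∧ en.2.2 < h en.1 (σh.refine c.info en.1)) →
      en.1 ∉ ts.goal → SuccList ts en.1 l →
      AStep reeval c (.expand en)
        (.cont (expandAll ts σh h
          { c with openq := rest, closed := insert en.1 c.closed,
                   info := σh.refine c.info en.1 } l))
  | unsolv {c : AConfig S L I} :
      c.openq = 0 → AStep reeval c .unsolv .unsolvable

/-- The initial configuration of dynA*. -/
noncomputable def initAConfig : AConfig S L I where
  known := {ts.init}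
  closed := ∅
  openq :=
    if h ts.init σh.initInfo = ⊤ then 0 else {(ts.init, 0, h ts.init σh.initInfo)}
  par := fun x => if x = ts.init then some (0, none) else none
  info := σh.initInfo

/-- `IsExec ts σh h reeval e lab N`: `e 0, …, e N` are the configurations at the
beginnings of the iterations of an execution of dynA*, with `lab n` recording what
happened in iteration `n`. -/
def IsExec (reeval : Bool) (e : ℕ → AConfig S L I) (lab : ℕ → ALab S L) (N : ℕ) : Prop :=
  e 0 = initAConfig ts σh h ∧
  ∀ n < N, AStep ts σh h reeval (e n) (lab n) (.cont (e (n + 1)))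

/-- A state `s` is settled at iteration `n` if it was expanded in some earlier
iteration at whose beginning its stored g-value was `g*(s)`. -/
def SettledAt (e : ℕ → AConfig S L I) (lab : ℕ → ALab S L) (n : ℕ) (s : S) : Prop :=
  ∃ m < n, ∃ en : Entry S, lab m = .expand en ∧ en.1 = s ∧
    (gOf (e m) s : ℝ≥0∞) = ts.gstar s

/-- Iterated refinement of an information object on a fixed state. -/
def refIter (i : I) (s : S) : ℕ → I
  | 0 => i
  | n + 1 => σh.refine (refIter i s n) s

end DynAStar

/-! ## Auxiliary development for Statement 10 -/

section Stmt10Proof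

variable {S L I : Type} (ts : TransSys S L) (σh : InfoSource ts I) (h : S → I → ℝ≥0∞)

/-- The g-value stored in a parent map. -/
noncomputable abbrev gP (par : S → Option (NNReal × Option (Tran S L))) (s : S) : NNReal :=
  ((par s).map Prod.fst).getD 0

lemma gOf_eq_gP (c : AConfig S L I) (s : S) : gOf c s = gP c.par s := rfl

lemma gOf_congr_par {c c' : AConfig S L I} (hpar : c'.par = c.par) (s : S) :
    gOf c' s = gOf c s := by rw [gOf_eq_gP, gOf_eq_gP, hpar]

lemma gP_eq {par : S → Option (NNReal × Option (Tran S L))} {s : S} {g : NNReal}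
    {p : Option (Tran S L)} (hs : par s = some (g, p)) : gP par s = g := by
  simp only [gP, hs, Option.map_some, Option.getD_some]

lemma hstar_le_path {s g : S} {π : List (Tran S L)} (hg : g ∈ ts.goal)
    (hp : ts.IsPathFrom s π g) : ts.hstar s ≤ (ts.pathCost π : ℝ≥0∞) :=
  sInf_le ⟨π, g, hg, hp, rfl⟩

lemma pathCost_cons (t : Tran S L) (π : List (Tran S L)) :
    ts.pathCost (t :: π) = ts.cost t.2.1 + ts.pathCost π := by
  simp [TransSys.pathCost]

lemma parUpd_ne (par : S → Option (NNReal × Option (Tran S L))) (t : Tran S L) {x : S}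
    (hx : x ≠ t.2.2) : parUpd ts par t x = par x := if_neg hx

lemma gP_parUpd_ne (par : S → Option (NNReal × Option (Tran S L))) (t : Tran S L) {x : S}
    (hx : x ≠ t.2.2) : gP (parUpd ts par t) x = gP par x := by
  rw [gP, parUpd_ne ts par t hx]

lemma parUpd_target {par : S → Option (NNReal × Option (Tran S L))} {t : Tran S L}
    {g : NNReal} {p : Option (Tran S L)} (h1 : par t.1 = some (g, p)) :
    ∃ q, parUpd ts par t t.2.2 = some q ∧ q.1 ≤ g + ts.cost t.2.1 ∧
      (∀ pr', par t.2.2 = some pr' → q.1 ≤ pr'.1) ∧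
      (q.1 = g + ts.cost t.2.1 ∨ par t.2.2 = some q) := by
  unfold parUpd
  rw [if_pos rfl, h1]
  dsimp only
  cases h2 : par t.2.2 with
  | none =>
      refine ⟨(g + ts.cost t.2.1, some t), rfl, le_rfl, ?_, Or.inl rfl⟩
      intro pr' hh; cases hh
  | some pr =>
      obtain ⟨g', p'⟩ := pr
      dsimp only
      by_cases hle : g + ts.cost t.2.1 ≤ g'
      · rw [if_pos hle]
        refine ⟨_, rfl, le_rfl, ?_, Or.inl rfl⟩
        intro pr' hh; injection hh with hh'; rw [← hh']; exact hle
      · rw [if_neg hle]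
        refine ⟨_, rfl, le_of_not_ge hle, ?_, Or.inr rfl⟩
        intro pr' hh; injection hh with hh'; rw [← hh']

lemma parUpd_some_le {par : S → Option (NNReal × Option (Tran S L))} {t : Tran S L}
    {g : NNReal} {p : Option (Tran S L)} (h1 : par t.1 = some (g, p)) {s : S}
    {pr : NNReal × Option (Tran S L)} (hs : par s = some pr) :
    ∃ q, parUpd ts par t s = some q ∧ q.1 ≤ pr.1 := by
  by_cases hx : s = t.2.2
  · subst hx
    obtain ⟨q, hq, _, h3, _⟩ := parUpd_target ts h1
    exact ⟨q, hq, h3 pr hs⟩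
  · exact ⟨pr, by rw [parUpd_ne ts par t hx, hs], le_rfl⟩

lemma gP_parUpd_le {par : S → Option (NNReal × Option (Tran S L))} {t : Tran S L}
    {g : NNReal} {p : Option (Tran S L)} (h1 : par t.1 = some (g, p)) {s : S}
    {pr : NNReal × Option (Tran S L)} (hs : par s = some pr) :
    gP (parUpd ts par t) s ≤ gP par s := by
  obtain ⟨q, hq, hle⟩ := parUpd_some_le ts h1 hs
  simp only [gP, hq, hs, Option.map_some, Option.getD_some]
  exact hle

lemma gP_parUpd_target_le {par : S → Option (NNReal × Option (Tran S L))} {t : Tran S L}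
    {g : NNReal} {p : Option (Tran S L)} (h1 : par t.1 = some (g, p)) :
    gP (parUpd ts par t) t.2.2 ≤ g + ts.cost t.2.1 := by
  obtain ⟨q, hq, h2, _, _⟩ := parUpd_target ts h1
  simp only [gP, hq, Option.map_some, Option.getD_some]
  exact h2

lemma gP_parUpd_self {par : S → Option (NNReal × Option (Tran S L))} {t : Tran S L}
    {g : NNReal} {p : Option (Tran S L)} (h11 : t.1 = t.2.2) (h1 : par t.1 = some (g, p)) :
    gP (parUpd ts par t) t.2.2 = g := by
  have hv : par t.2.2 = some (g, p) := by rw [← h11]; exact h1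
  obtain ⟨q, hq, h2, h3, h4⟩ := parUpd_target ts h1
  have hle : q.1 ≤ g := h3 (g, p) hv
  have hge : g ≤ q.1 := by
    rcases h4 with h4 | h4
    · rw [h4]; exact le_self_add
    · rw [hv] at h4; injection h4 with h4; rw [← h4]
  simp only [gP, hq, Option.map_some, Option.getD_some]
  exact le_antisymm hle hge

/-- The basic invariant maintained by dynA*. -/
structure BInv (c : AConfig S L I) : Prop where
  initKnown : ts.init ∈ c.known
  initPar : ∃ p, c.par ts.init = some (0, p)
  closedKnown : c.closed ⊆ c.known
  closedNotGoal : ∀ s ∈ c.closed, s ∉ ts.goal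
  parDef : ∀ s ∈ c.known, ∃ pr, c.par s = some pr
  openKnown : ∀ en ∈ c.openq, en.1 ∈ c.known
  openH : ∀ en ∈ c.openq, en.2.2 ≤ ts.hstar en.1
  reach : σh.ReachWith c.info c.known
  openG : ∀ v ∈ c.known, v ∉ c.closed → ts.hstar v < ⊤ →
    ∃ en ∈ c.openq, en.1 = v ∧ en.2.1 ≤ gOf c v

/-- Closed states have all their successors relaxed. -/
def CRel (c : AConfig S L I) : Prop :=
  ∀ w ∈ c.closed, ts.hstar w < ⊤ → ∀ t ∈ ts.trans, t.1 = w →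
    t.2.2 ∈ c.known ∧ gOf c t.2.2 ≤ gOf c w + ts.cost t.2.1

/-- Variant of `CRel` during the expansion of `u` with pending transitions `l`. -/
def MRel (u : S) (l : List (Tran S L)) (c : AConfig S L I) : Prop :=
  ∀ w ∈ c.closed, ts.hstar w < ⊤ → ∀ t ∈ ts.trans, t.1 = w →
    (t.2.2 ∈ c.known ∧ gOf c t.2.2 ≤ gOf c w + ts.cost t.2.1) ∨ (w = u ∧ t ∈ l)

def AInv (c : AConfig S L I) : Prop := BInv ts σh c ∧ CRel ts c

lemma CRel_of_MRel_nil {u : S} {c : AConfig S L I} (hM : MRel ts u [] c) : CRel ts c :=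
  fun w hw hf t ht h1 =>
    (hM w hw hf t ht h1).resolve_right (fun hh => List.not_mem_nil hh.2)

/-! ### Scenario lemmas for `procSucc` -/

lemma procSucc_eq_top {c : AConfig S L I} {t : Tran S L}
    (htop : h t.2.2 (σh.update c.info t) = ⊤) :
    procSucc ts σh h c t =
      { known := insert t.2.2 c.known, closed := c.closed, openq := c.openq,
        par := parUpd ts c.par t, info := σh.update c.info t } := by
  simp only [procSucc]
  rw [if_pos htop]

lemma procSucc_eq_new {c : AConfig S L I} {t : Tran S L}
    (hfin : ¬ h t.2.2 (σh.update c.info t) = ⊤) (hmem : t.2.2 ∉ c.known) :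
    procSucc ts σh h c t =
      { known := insert t.2.2 c.known, closed := c.closed,
        openq := (t.2.2, ((parUpd ts c.par t t.2.2).map Prod.fst).getD 0,
          h t.2.2 (σh.update c.info t)) ::ₘ c.openq,
        par := parUpd ts c.par t, info := σh.update c.info t } := by
  simp only [procSucc]
  rw [if_neg hfin, if_neg hmem]

lemma procSucc_eq_reopen {c : AConfig S L I} {t : Tran S L}
    (hfin : ¬ h t.2.2 (σh.update c.info t) = ⊤) (hmem : t.2.2 ∈ c.known)
    (hlt : ((parUpd ts c.par t t.2.2).map Prod.fst).getD 0 < gOf c t.2.2) :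
    procSucc ts σh h c t =
      { known := insert t.2.2 c.known, closed := c.closed \ {t.2.2},
        openq := (t.2.2, ((parUpd ts c.par t t.2.2).map Prod.fst).getD 0,
          h t.2.2 (σh.update c.info t)) ::ₘ c.openq,
        par := parUpd ts c.par t, info := σh.update c.info t } := by
  simp only [procSucc]
  rw [if_neg hfin, if_pos hmem]
  dsimp only
  rw [if_pos hlt]

lemma procSucc_eq_keep {c : AConfig S L I} {t : Tran S L}
    (hfin : ¬ h t.2.2 (σh.update c.info t) = ⊤) (hmem : t.2.2 ∈ c.known)
    (hlt : ¬ ((parUpd ts c.par t t.2.2).map Prod.fst).getD 0 < gOf c t.2.2) :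
    procSucc ts σh h c t =
      { known := insert t.2.2 c.known, closed := c.closed, openq := c.openq,
        par := parUpd ts c.par t, info := σh.update c.info t } := by
  simp only [procSucc]
  rw [if_neg hfin, if_pos hmem]
  dsimp only
  rw [if_neg hlt]

/-- Abstract description of the effect of `procSucc`. -/
def GoodSucc (c : AConfig S L I) (t : Tran S L) (c₂ : AConfig S L I) : Prop :=
  c₂.known = insert t.2.2 c.known ∧ c₂.par = parUpd ts c.par t ∧
  c₂.info = σh.update c.info t ∧
  (∀ x ∈ c₂.closed, x ∈ c.closed) ∧
  (∀ x ∈ c.closed, x ≠ t.2.2 → x ∈ c₂.closed) ∧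
  (∀ en ∈ c.openq, en ∈ c₂.openq) ∧
  (∀ en ∈ c₂.openq, en ∈ c.openq ∨
    en = (t.2.2, gP (parUpd ts c.par t) t.2.2, h t.2.2 (σh.update c.info t))) ∧
  (ts.hstar t.2.2 < ⊤ → t.2.2 ∈ c₂.closed →
    gP (parUpd ts c.par t) t.2.2 = gP c.par t.2.2) ∧
  (ts.hstar t.2.2 < ⊤ → t.2.2 ∉ c₂.closed →
    ((t.2.2, gP (parUpd ts c.par t) t.2.2, h t.2.2 (σh.update c.info t)) ∈ c₂.openq ∨
      (t.2.2 ∉ c.closed ∧ gP (parUpd ts c.par t) t.2.2 = gP c.par t.2.2 ∧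
        t.2.2 ∈ c.known))) ∧
  (t.1 = t.2.2 → ∀ x ∈ c.closed, x ∈ c₂.closed)

lemma procSucc_good (hadm : DynAdmissible ts σh h) {c : AConfig S L I} {t : Tran S L}
    (hB : BInv ts σh c)
    (hreach2 : σh.ReachWith (σh.update c.info t) (insert t.2.2 c.known))
    {g₀ : NNReal} {p₀ : Option (Tran S L)} (hpart1 : c.par t.1 = some (g₀, p₀)) :
    GoodSucc ts σh h c t (procSucc ts σh h c t) := by
  have hadm2 : h t.2.2 (σh.update c.info t) ≤ ts.hstar t.2.2 :=
    hadm t.2.2 _ ⟨_, hreach2⟩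
  have hstarTop : h t.2.2 (σh.update c.info t) = ⊤ → ts.hstar t.2.2 = ⊤ := by
    intro hh; exact top_le_iff.1 (hh ▸ hadm2)
  have hkeepEq : t.2.2 ∈ c.known → ¬ gP (parUpd ts c.par t) t.2.2 < gOf c t.2.2 →
      gP (parUpd ts c.par t) t.2.2 = gP c.par t.2.2 := by
    intro hmem hnlt
    obtain ⟨pr, hpr⟩ := hB.parDef t.2.2 hmem
    exact le_antisymm (gP_parUpd_le ts hpart1 hpr) (le_of_not_gt hnlt)
  by_cases htop : h t.2.2 (σh.update c.info t) = ⊤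
  · rw [procSucc_eq_top ts σh h htop]
    refine ⟨rfl, rfl, rfl, fun x hx => hx, fun x hx _ => hx, fun en he => he,
      fun en he => Or.inl he, ?_, ?_, fun _ x hx => hx⟩
    · intro hfin _; exact absurd (hstarTop htop) (by intro hh; rw [hh] at hfin; exact lt_irrefl _ hfin)
    · intro hfin _; exact absurd (hstarTop htop) (by intro hh; rw [hh] at hfin; exact lt_irrefl _ hfin)
  · by_cases hmem : t.2.2 ∈ c.known
    · by_cases hlt : ((parUpd ts c.par t t.2.2).map Prod.fst).getD 0 < gOf c t.2.2
      · -- reopen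
        rw [procSucc_eq_reopen ts σh h htop hmem hlt]
        refine ⟨rfl, rfl, rfl, fun x hx => hx.1,
          fun x hx hne => ⟨hx, fun hh => hne hh⟩,
          fun en he => Multiset.mem_cons_of_mem he,
          fun en he => (Multiset.mem_cons.1 he).elim (fun hh => Or.inr hh) Or.inl,
          ?_, ?_, ?_⟩
        · intro _ hcl; exact absurd rfl hcl.2
        · intro _ _; exact Or.inl (Multiset.mem_cons_self _ _)
        · -- self-loop cannot strictly decrease
          intro h11 x hx
          exfalso
          have hself := gP_parUpd_self ts h11 hpart1
          have hlt' : gP (parUpd ts c.par t) t.2.2 < gP c.par t.2.2 := hlt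
          have hg0 : gP c.par t.2.2 = g₀ := by
            have hv : c.par t.2.2 = some (g₀, p₀) := by rw [← h11]; exact hpart1
            exact gP_eq hv
          rw [hself, hg0] at hlt'
          exact lt_irrefl _ hlt'
      · -- keep
        rw [procSucc_eq_keep ts σh h htop hmem hlt]
        refine ⟨rfl, rfl, rfl, fun x hx => hx, fun x hx _ => hx, fun en he => he,
          fun en he => Or.inl he, fun _ _ => hkeepEq hmem hlt, ?_, fun _ x hx => hx⟩
        intro _ hncl
        exact Or.inr ⟨hncl, hkeepEq hmem hlt, hmem⟩
    · -- new
      rw [procSucc_eq_new ts σh h htop hmem]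
      refine ⟨rfl, rfl, rfl, fun x hx => hx, fun x hx _ => hx,
        fun en he => Multiset.mem_cons_of_mem he, ?_, ?_, ?_, fun _ x hx => hx⟩
      · intro en he
        rcases Multiset.mem_cons.1 he with hh | hh
        · exact Or.inr hh
        · exact Or.inl hh
      · intro _ hcl; exact absurd (hB.closedKnown hcl) hmem
      · intro _ _; exact Or.inl (Multiset.mem_cons_self _ _)

lemma mid_step (hadm : DynAdmissible ts σh h) {c : AConfig S L I} {u : S} {t : Tran S L}
    {l : List (Tran S L)} (hB : BInv ts σh c) (hu : u ∈ c.closed)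
    (hM : MRel ts u (t :: l) c) (ht : t ∈ ts.trans) (ht1 : t.1 = u) :
    BInv ts σh (procSucc ts σh h c t) ∧ u ∈ (procSucc ts σh h c t).closed ∧
      MRel ts u l (procSucc ts σh h c t) := by
  have huk : u ∈ c.known := hB.closedKnown hu
  obtain ⟨⟨gu, pu⟩, hparu⟩ := hB.parDef u huk
  have hpart1 : c.par t.1 = some (gu, pu) := by rw [ht1]; exact hparu
  have hreach2 : σh.ReachWith (σh.update c.info t) (insert t.2.2 c.known) :=
    InfoSource.ReachWith.update hB.reach ht (by rw [ht1]; exact huk)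
  have hadm2 : h t.2.2 (σh.update c.info t) ≤ ts.hstar t.2.2 :=
    hadm t.2.2 _ ⟨_, hreach2⟩
  obtain ⟨hk, hp, hi, hcl1, hcl2, hop1, hop2, h8, h9, h10⟩ :=
    procSucc_good ts σh h hadm hB hreach2 hpart1
  set c₂ := procSucc ts σh h c t with hc₂
  have hmono : ∀ s : S, s ∈ c.known → gP (parUpd ts c.par t) s ≤ gP c.par s := by
    intro s hs
    obtain ⟨pr, hpr⟩ := hB.parDef s hs
    exact gP_parUpd_le ts hpart1 hpr
  have hBI : BInv ts σh c₂ := by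
    constructor
    · rw [hk]; exact Set.mem_insert_of_mem _ hB.initKnown
    · obtain ⟨p0, hp0⟩ := hB.initPar
      obtain ⟨q, hq, hle⟩ := parUpd_some_le ts hpart1 hp0
      have hq1 : q.1 = 0 := le_antisymm hle zero_le
      exact ⟨q.2, by rw [hp, hq, ← hq1]⟩
    · intro x hx
      rw [hk]
      exact Set.mem_insert_of_mem _ (hB.closedKnown (hcl1 x hx))
    · intro x hx; exact hB.closedNotGoal x (hcl1 x hx)
    · intro s hs
      rw [hk] at hs
      by_cases hx : s = t.2.2
      · subst hx
        obtain ⟨q, hq, _, _, _⟩ := parUpd_target ts hpart1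
        exact ⟨q, by rw [hp]; exact hq⟩
      · have hmem : s ∈ c.known := (Set.mem_insert_iff.1 hs).resolve_left hx
        obtain ⟨pr, hpr⟩ := hB.parDef s hmem
        exact ⟨pr, by rw [hp, parUpd_ne ts c.par t hx]; exact hpr⟩
    · intro en hen
      rcases hop2 en hen with hold | hnew
      · rw [hk]; exact Set.mem_insert_of_mem _ (hB.openKnown en hold)
      · rw [hnew, hk]; exact Set.mem_insert _ _
    · intro en hen
      rcases hop2 en hen with hold | hnew
      · exact hB.openH en hold
      · rw [hnew]; exact hadm2
    · rw [hi, hk]; exact hreach2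
    · intro v hv hvnc hfin
      rw [hk] at hv
      by_cases hx : v = t.2.2
      · subst hx
        rcases h9 hfin hvnc with hnew | ⟨hnc, heq, hmem⟩
        · refine ⟨_, hnew, rfl, ?_⟩
          rw [gOf_eq_gP, hp]
        · obtain ⟨en, hen, he1, he2⟩ := hB.openG t.2.2 hmem hnc hfin
          refine ⟨en, hop1 en hen, he1, ?_⟩
          rw [gOf_eq_gP, hp, heq]; exact he2
      · have hvk : v ∈ c.known := (Set.mem_insert_iff.1 hv).resolve_left hx
        have hvnc' : v ∉ c.closed := fun hc => hvnc (hcl2 v hc hx)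
        obtain ⟨en, hen, he1, he2⟩ := hB.openG v hvk hvnc' hfin
        refine ⟨en, hop1 en hen, he1, ?_⟩
        rw [gOf_eq_gP, hp, gP_parUpd_ne ts c.par t hx]; exact he2
  refine ⟨hBI, ?_, ?_⟩
  · by_cases hx : u = t.2.2
    · exact h10 (by rw [ht1]; exact hx) u hu
    · exact hcl2 u hu hx
  · intro w hw hfinw t' ht' ht'1
    have hwc : w ∈ c.closed := hcl1 w hw
    have hweq : gOf c₂ w = gOf c w := by
      by_cases hx : w = t.2.2
      · subst hx
        rw [gOf_eq_gP, gOf_eq_gP, hp]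
        exact h8 hfinw hw
      · rw [gOf_eq_gP, gOf_eq_gP, hp, gP_parUpd_ne ts c.par t hx]
    rcases hM w hwc hfinw t' ht' ht'1 with ⟨hmem, hle⟩ | ⟨hwu, hmemt⟩
    · left
      refine ⟨by rw [hk]; exact Set.mem_insert_of_mem _ hmem, ?_⟩
      calc gOf c₂ t'.2.2 = gP (parUpd ts c.par t) t'.2.2 := by rw [gOf_eq_gP, hp]
        _ ≤ gP c.par t'.2.2 := hmono t'.2.2 hmem
        _ = gOf c t'.2.2 := rfl
        _ ≤ gOf c w + ts.cost t'.2.1 := hle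
        _ = gOf c₂ w + ts.cost t'.2.1 := by rw [hweq]
    · rcases List.mem_cons.1 hmemt with hcase | hmemt'
      · left
        rw [hcase]
        have hgu2 : gOf c w = gu := by rw [gOf_eq_gP, hwu]; exact gP_eq hparu
        constructor
        · rw [hk]; exact Set.mem_insert _ _
        · calc gOf c₂ t.2.2 = gP (parUpd ts c.par t) t.2.2 := by rw [gOf_eq_gP, hp]
            _ ≤ gu + ts.cost t.2.1 := gP_parUpd_target_le ts hpart1
            _ = gOf c w + ts.cost t.2.1 := by rw [hgu2]
            _ = gOf c₂ w + ts.cost t.2.1 := by rw [hweq]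
      · exact Or.inr ⟨hwu, hmemt'⟩

lemma expandAll_inv (hadm : DynAdmissible ts σh h) {u : S} :
    ∀ (l : List (Tran S L)) (c : AConfig S L I), BInv ts σh c → u ∈ c.closed →
      MRel ts u l c → (∀ t ∈ l, t ∈ ts.trans ∧ t.1 = u) →
      BInv ts σh (expandAll ts σh h c l) ∧ MRel ts u [] (expandAll ts σh h c l) := by
  intro l
  induction l with
  | nil => intro c hB hu hM _; exact ⟨hB, hM⟩
  | cons t l ih =>
      intro c hB hu hM hall
      obtain ⟨hB', hu', hM'⟩ := mid_step ts σh h hadm hB hu hM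
        (hall t List.mem_cons_self).1 (hall t List.mem_cons_self).2
      exact ih (procSucc ts σh h c t) hB' hu' hM'
        (fun t' ht' => hall t' (List.mem_cons_of_mem _ ht'))

lemma BInv_of {c c' : AConfig S L I} (hB : BInv ts σh c)
    (hk : c'.known = c.known) (hcl : c'.closed = c.closed) (hpar : c'.par = c.par)
    (hreach : σh.ReachWith c'.info c.known)
    (hopen : ∀ en ∈ c'.openq, en ∈ c.openq ∨ (en.1 ∈ c.known ∧ en.2.2 ≤ ts.hstar en.1))
    (hopenG : ∀ v ∈ c.known, v ∉ c.closed → ts.hstar v < ⊤ →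
        ∃ en ∈ c'.openq, en.1 = v ∧ en.2.1 ≤ gOf c v) : BInv ts σh c' := by
  constructor
  · rw [hk]; exact hB.initKnown
  · rw [hpar]; exact hB.initPar
  · rw [hk, hcl]; exact hB.closedKnown
  · rw [hcl]; exact hB.closedNotGoal
  · rw [hk, hpar]; exact hB.parDef
  · intro en hen
    rw [hk]
    rcases hopen en hen with h1 | ⟨h1, _⟩
    · exact hB.openKnown en h1
    · exact h1
  · intro en hen
    rcases hopen en hen with h1 | ⟨_, h2⟩
    · exact hB.openH en h1
    · exact h2
  · rw [hk]; exact hreach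
  · intro v hv hvnc hfin
    rw [hk] at hv; rw [hcl] at hvnc
    obtain ⟨en, hen, he1, he2⟩ := hopenG v hv hvnc hfin
    exact ⟨en, hen, he1, by rw [gOf_congr_par hpar]; exact he2⟩

lemma CRel_congr {c c' : AConfig S L I} (hk : c'.known = c.known)
    (hcl : c'.closed = c.closed) (hpar : c'.par = c.par) (hC : CRel ts c) : CRel ts c' := by
  intro w hw hf t ht h1
  rw [hcl] at hw
  obtain ⟨h2, h3⟩ := hC w hw hf t ht h1
  exact ⟨by rw [hk]; exact h2, by rw [gOf_congr_par hpar, gOf_congr_par hpar]; exact h3⟩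

lemma inv_step (hadm : DynAdmissible ts σh h) {reeval : Bool} {c c' : AConfig S L I}
    {lb : ALab S L} (hI : AInv ts σh c) (hs : AStep ts σh h reeval c lb (.cont c')) :
    AInv ts σh c' := by
  obtain ⟨hB, hC⟩ := hI
  cases hs with
  | dup hq hmin hcl =>
      rename_i en rest
      refine ⟨BInv_of ts σh hB rfl rfl rfl hB.reach ?_ ?_, CRel_congr ts rfl rfl rfl hC⟩
      · intro en' hen'
        exact Or.inl (by rw [hq]; exact Multiset.mem_cons_of_mem hen')
      · intro v hv hvnc hfin
        obtain ⟨en', hen', he1, he2⟩ := hB.openG v hv hvnc hfin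
        rw [hq] at hen'
        rcases Multiset.mem_cons.1 hen' with hcase | hr
        · exfalso
          have hv1 : v = en.1 := by rw [← he1, hcase]
          exact hvnc (by rw [hv1]; exact hcl)
        · exact ⟨en', hr, he1, he2⟩
  | reevFin hq hmin hnc hre hlt hnt =>
      rename_i en rest
      have henq : en ∈ c.openq := by rw [hq]; exact Multiset.mem_cons_self _ _
      have hen1k : en.1 ∈ c.known := hB.openKnown en henq
      have hreach' : σh.ReachWith (σh.refine c.info en.1) c.known :=
        InfoSource.ReachWith.refine hB.reach hen1k
      refine ⟨BInv_of ts σh hB rfl rfl rfl hreach' ?_ ?_, CRel_congr ts rfl rfl rfl hC⟩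
      · intro en' hen'
        rcases Multiset.mem_cons.1 hen' with rfl | hr
        · exact Or.inr ⟨hen1k, hadm en.1 _ ⟨_, hreach'⟩⟩
        · exact Or.inl (by rw [hq]; exact Multiset.mem_cons_of_mem hr)
      · intro v hv hvnc hfin
        obtain ⟨en', hen', he1, he2⟩ := hB.openG v hv hvnc hfin
        rw [hq] at hen'
        rcases Multiset.mem_cons.1 hen' with hcase | hr
        · have hv1 : en.1 = v := by rw [← hcase]; exact he1
          refine ⟨(en.1, gOf c en.1, h en.1 (σh.refine c.info en.1)),
            Multiset.mem_cons_self _ _, hv1, ?_⟩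
          exact le_of_eq (by rw [hv1])
        · exact ⟨en', Multiset.mem_cons_of_mem hr, he1, he2⟩
  | reevInf hq hmin hnc hre hlt htp =>
      rename_i en rest
      have henq : en ∈ c.openq := by rw [hq]; exact Multiset.mem_cons_self _ _
      have hen1k : en.1 ∈ c.known := hB.openKnown en henq
      have hreach' : σh.ReachWith (σh.refine c.info en.1) c.known :=
        InfoSource.ReachWith.refine hB.reach hen1k
      refine ⟨BInv_of ts σh hB rfl rfl rfl hreach' ?_ ?_, CRel_congr ts rfl rfl rfl hC⟩
      · intro en' hen'
        exact Or.inl (by rw [hq]; exact Multiset.mem_cons_of_mem hen')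
      · intro v hv hvnc hfin
        obtain ⟨en', hen', he1, he2⟩ := hB.openG v hv hvnc hfin
        rw [hq] at hen'
        rcases Multiset.mem_cons.1 hen' with hcase | hr
        · exfalso
          have hh : (⊤ : ℝ≥0∞) ≤ ts.hstar en.1 := by
            rw [← htp]; exact hadm en.1 _ ⟨_, hreach'⟩
          have hv1 : en.1 = v := by rw [← hcase]; exact he1
          rw [hv1] at hh
          exact absurd hfin (by rw [top_le_iff.1 hh]; exact lt_irrefl _)
        · exact ⟨en', hr, he1, he2⟩
  | expand hq hmin hnc hnre hng hsl =>
      rename_i en rest l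
      have henq : en ∈ c.openq := by rw [hq]; exact Multiset.mem_cons_self _ _
      have hen1k : en.1 ∈ c.known := hB.openKnown en henq
      have hreach' : σh.ReachWith (σh.refine c.info en.1) c.known :=
        InfoSource.ReachWith.refine hB.reach hen1k
      set c₁ : AConfig S L I :=
        { c with openq := rest, closed := insert en.1 c.closed,
                 info := σh.refine c.info en.1 } with hc₁
      have hB1 : BInv ts σh c₁ := by
        constructor
        · exact hB.initKnown
        · exact hB.initPar
        · exact Set.insert_subset_iff.2 ⟨hen1k, hB.closedKnown⟩
        · intro s hs
          rcases Set.mem_insert_iff.1 hs with rfl | hs'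
          · exact hng
          · exact hB.closedNotGoal s hs'
        · exact hB.parDef
        · intro en' hen'
          exact hB.openKnown en' (by rw [hq]; exact Multiset.mem_cons_of_mem hen')
        · intro en' hen'
          exact hB.openH en' (by rw [hq]; exact Multiset.mem_cons_of_mem hen')
        · exact hreach'
        · intro v hv hvnc hfin
          have hvne : v ≠ en.1 := fun hh => hvnc (hh ▸ Set.mem_insert _ _)
          have hvnc' : v ∉ c.closed := fun hh => hvnc (Set.mem_insert_of_mem _ hh)
          obtain ⟨en', hen', he1, he2⟩ := hB.openG v hv hvnc' hfin
          rw [hq] at hen'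
          rcases Multiset.mem_cons.1 hen' with hcase | hr
          · exact absurd (by rw [← he1, hcase] : v = en.1) hvne
          · exact ⟨en', hr, he1, he2⟩
      have hu1 : en.1 ∈ c₁.closed := Set.mem_insert _ _
      have hM1 : MRel ts en.1 l c₁ := by
        intro w hw hfinw t' ht' ht'1
        rcases Set.mem_insert_iff.1 hw with rfl | hw'
        · exact Or.inr ⟨rfl, (hsl.2 t').2 ⟨ht', ht'1⟩⟩
        · exact Or.inl (hC w hw' hfinw t' ht' ht'1)
      obtain ⟨hB2, hM2⟩ := expandAll_inv ts σh h hadm l c₁ hB1 hu1 hM1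
        (fun t' ht' => (hsl.2 t').1 ht')
      exact ⟨hB2, CRel_of_MRel_nil ts hM2⟩

lemma inv_init (hadm : DynAdmissible ts σh h) : AInv ts σh (initAConfig ts σh h) := by
  have hb : σh.ReachableInfo σh.initInfo := ⟨{ts.init}, InfoSource.ReachWith.base⟩
  constructor
  · constructor
    · exact rfl
    · exact ⟨none, if_pos rfl⟩
    · intro x hx; exact absurd hx (Set.notMem_empty x)
    · intro x hx; exact absurd hx (Set.notMem_empty x)
    · intro s hs
      have hs' : s = ts.init := hs
      exact ⟨(0, none), by rw [hs']; exact if_pos rfl⟩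
    · intro en hen
      by_cases h0 : h ts.init σh.initInfo = ⊤
      · simp only [initAConfig, h0, if_pos] at hen
        exact absurd hen (Multiset.notMem_zero en)
      · simp only [initAConfig, h0, if_neg, if_false] at hen
        have : en = (ts.init, 0, h ts.init σh.initInfo) := Multiset.mem_singleton.1 hen
        rw [this]; exact rfl
    · intro en hen
      by_cases h0 : h ts.init σh.initInfo = ⊤
      · simp only [initAConfig, h0, if_pos] at hen
        exact absurd hen (Multiset.notMem_zero en)
      · simp only [initAConfig, h0, if_neg, if_false] at hen
        have heq : en = (ts.init, 0, h ts.init σh.initInfo) := Multiset.mem_singleton.1 hen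
        rw [heq]
        exact hadm ts.init _ hb
    · exact InfoSource.ReachWith.base
    · intro v hv hvnc hfin
      have hv' : v = ts.init := hv
      subst hv'
      by_cases h0 : h ts.init σh.initInfo = ⊤
      · exfalso
        have hht : (⊤ : ℝ≥0∞) ≤ ts.hstar ts.init := by rw [← h0]; exact hadm ts.init _ hb
        exact absurd hfin (by rw [top_le_iff.1 hht]; exact lt_irrefl _)
      · refine ⟨(ts.init, 0, h ts.init σh.initInfo), ?_, rfl, ?_⟩
        · show _ ∈ (initAConfig ts σh h).openq
          simp only [initAConfig, h0, if_neg, if_false]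
          exact Multiset.mem_singleton.2 rfl
        · exact zero_le
  · intro w hw; exact absurd hw (Set.notMem_empty w)

lemma core_path {c : AConfig S L I} (hI : AInv ts σh c) :
    ∀ {ρ : List (Tran S L)} {u s : S}, ts.IsPathFrom u ρ s → s ∈ ts.goal → u ∈ c.known →
      ∀ B : NNReal, gOf c u ≤ B →
      ∃ en ∈ c.openq, fval en ≤ ((B + ts.pathCost ρ : NNReal) : ℝ≥0∞) := by
  intro ρ u s hp
  induction hp with
  | nil s0 =>
      intro hg hu B hB
      have h0 : ts.hstar s0 ≤ ((ts.pathCost ([] : List (Tran S L)) : NNReal) : ℝ≥0∞) :=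
        hstar_le_path ts hg (TransSys.IsPathFrom.nil s0)
      have hfin : ts.hstar s0 < ⊤ := lt_of_le_of_lt h0 ENNReal.coe_lt_top
      have hnc : s0 ∉ c.closed := fun hcl => hI.1.closedNotGoal s0 hcl hg
      obtain ⟨en, hen, he1, he2⟩ := hI.1.openG s0 hu hnc hfin
      refine ⟨en, hen, ?_⟩
      have hh := hI.1.openH en hen
      rw [he1] at hh
      calc fval en = (en.2.1 : ℝ≥0∞) + en.2.2 := rfl
        _ ≤ (B : ℝ≥0∞) + ((ts.pathCost ([] : List (Tran S L)) : NNReal) : ℝ≥0∞) :=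
            add_le_add (ENNReal.coe_le_coe.2 (le_trans he2 hB)) (le_trans hh h0)
        _ = _ := (ENNReal.coe_add _ _).symm
  | @cons s₁ m e' ll π htr hp ih =>
      intro hg hu B hB
      have hfin : ts.hstar s₁ ≤ ((ts.pathCost ((s₁, ll, m) :: π) : NNReal) : ℝ≥0∞) :=
        hstar_le_path ts hg (TransSys.IsPathFrom.cons htr hp)
      have hfin' : ts.hstar s₁ < ⊤ := lt_of_le_of_lt hfin ENNReal.coe_lt_top
      by_cases hcl : s₁ ∈ c.closed
      · obtain ⟨hm, hgle⟩ := hI.2 s₁ hcl hfin' (s₁, ll, m) htr rfl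
        obtain ⟨en, hen, hf⟩ := ih hg hm (B + ts.cost ll)
          (le_trans hgle (add_le_add hB le_rfl))
        refine ⟨en, hen, le_trans hf ?_⟩
        apply ENNReal.coe_le_coe.2
        rw [pathCost_cons]
        exact le_of_eq (by ring)
      · obtain ⟨en, hen, he1, he2⟩ := hI.1.openG s₁ hu hcl hfin'
        refine ⟨en, hen, ?_⟩
        have hh := hI.1.openH en hen
        rw [he1] at hh
        calc fval en = (en.2.1 : ℝ≥0∞) + en.2.2 := rfl
          _ ≤ (B : ℝ≥0∞) + ((ts.pathCost ((s₁, ll, m) :: π) : NNReal) : ℝ≥0∞) :=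
              add_le_add (ENNReal.coe_le_coe.2 (le_trans he2 hB)) (le_trans hh hfin)
          _ = _ := (ENNReal.coe_add _ _).symm

end Stmt10Proof

/-! ## Statement 10 -/


theorem stmt10 {S L I : Type} [Fintype S] [Fintype L]
    (ts : TransSys S L) (σh : InfoSource ts I) (h : S → I → ℝ≥0∞)
    (hadm : DynAdmissible ts σh h) (hsolv : ts.Solvable) (reeval : Bool)
    (e : ℕ → AConfig S L I) (lab : ℕ → ALab S L) (N : ℕ)
    (hexec : IsExec ts σh h reeval e lab N) :
    ∀ n ≤ N, ∃ en ∈ (e n).openq, fval en ≤ ts.hstar ts.init := by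
  obtain ⟨hinit, hsteps⟩ := hexec
  have hinv : ∀ n, n ≤ N → AInv ts σh (e n) := by
    intro n
    induction n with
    | zero => intro _; rw [hinit]; exact inv_init ts σh h hadm
    | succ k ih =>
        intro hk
        exact inv_step ts σh h hadm (ih (Nat.le_of_succ_le hk))
          (hsteps k (Nat.lt_of_succ_le hk))
  intro n hn
  have hI := hinv n hn
  have hpath : ∀ (π : List (Tran S L)) (g : S), g ∈ ts.goal → ts.IsPathFrom ts.init π g →
      ∃ en ∈ (e n).openq, fval en ≤ ((ts.pathCost π : NNReal) : ℝ≥0∞) := by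
    intro π g hg hp
    obtain ⟨p0, hp0⟩ := hI.1.initPar
    have hg0 : gOf (e n) ts.init ≤ 0 := le_of_eq (gP_eq hp0)
    obtain ⟨en, hen, hf⟩ := core_path ts σh hI hp hg hI.1.initKnown 0 hg0
    exact ⟨en, hen, by simpa using hf⟩
  obtain ⟨π₀, g₀, hg₀, hp₀⟩ := hsolv
  obtain ⟨en₁, hen₁, -⟩ := hpath π₀ g₀ hg₀ hp₀
  have hne : (e n).openq.toFinset.Nonempty := ⟨en₁, Multiset.mem_toFinset.2 hen₁⟩
  obtain ⟨en₀, hen₀, hmin⟩ := Finset.exists_min_image (e n).openq.toFinset fval hne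
  refine ⟨en₀, Multiset.mem_toFinset.1 hen₀, ?_⟩
  rw [TransSys.hstar]
  refine le_sInf ?_
  rintro x ⟨π, g, hg, hp, rfl⟩
  obtain ⟨en, hen, hf⟩ := hpath π g hg hp
  exact le_trans (hmin en (Multiset.mem_toFinset.2 hen)) hf
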